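/- arXiv:2602.19632 — 5 statements merged into one kernel-verified Lean document; each statement's English description precedes it below -/
import Mathlib

section
/- In the setting of the sink-source cocycle ε₀ on the root lattice of a simply laced root system (ε₀(α_i,α_j) = c_i^{a_{ij}}, extended bi-multiplicatively, with c_i = -c_j whenever i ≠ j and a_{ij} ≠ 0), for every root α ∈ Φ one has ε₀(α,α) = ε₀(α,-α) = -(-1)^{ht(α)}, where ht(α) is the height of α (the sum of the coefficients of α in the simple root basis). -/
open scoped RealInnerProductSpace

/-!
Write `c i = (-1) ^ d i` with `d i ∈ {0, 1}`, so that `ε₀(α, α) = (-1) ^ T` with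
`T = ∑ i, d i n i (A n)_i`. Symmetrizing, `2 T = ∑ i j, (d i + d j) a i j n i n j`, and on every
edge of the Dynkin diagram `d i + d j = 1`. Hence `2 T = (α, α) + 2 ∑ i, (2 d i - 1) n i ^ 2`,
and `(α, α) = 2` gives `T ≡ 1 + ∑ i, n i ^ 2 ≡ 1 + ht α (mod 2)`. Finally
`ε₀(α, -α) = ε₀(α, α)⁻¹ = ε₀(α, α)` since units of `ℤ` are involutions.
-/

theorem Int.negOnePow_sum {ι : Type*} (s : Finset ι) (f : ι → ℤ) :
    (∑ i ∈ s, f i).negOnePow = ∏ i ∈ s, (f i).negOnePow := by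
  classical
  induction s using Finset.induction with
  | empty => rfl
  | insert _ _ h ih => rw [Finset.sum_insert h, Finset.prod_insert h, Int.negOnePow_add, ih]

theorem Int.prod_negOnePow_zpow {ι : Type*} (s : Finset ι) (d e : ι → ℤ) :
    ∏ i ∈ s, (d i).negOnePow ^ e i = (∑ i ∈ s, d i * e i).negOnePow := by
  rw [Int.negOnePow_sum]
  exact Finset.prod_congr rfl fun i _ => by simp only [Int.negOnePow_def, zpow_mul]

def Int.unitsLog (u : ℤˣ) : ℤ := if u = 1 then 0 else 1

theorem Int.negOnePow_unitsLog (u : ℤˣ) : (Int.unitsLog u).negOnePow = u := by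
  rcases Int.units_eq_one_or u with rfl | rfl <;> rfl

theorem Int.unitsLog_add_unitsLog_of_eq_neg {u v : ℤˣ} (h : u = -v) :
    Int.unitsLog u + Int.unitsLog v = 1 := by
  subst h
  rcases Int.units_eq_one_or v with rfl | rfl <;> decide

theorem inner_sum_smul_sum_smul {E ι : Type*} [NormedAddCommGroup E] [InnerProductSpace ℝ E]
    (s : Finset ι) (b : ι → E) (x y : ι → ℝ) :
    ⟪∑ i ∈ s, x i • b i, ∑ j ∈ s, y j • b j⟫ = ∑ i ∈ s, ∑ j ∈ s, ⟪b i, b j⟫ * (x i * y j) := by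
  simp_rw [sum_inner, inner_sum, real_inner_smul_left, real_inner_smul_right]
  exact Finset.sum_congr rfl fun i _ => Finset.sum_congr rfl fun j _ => by ring

section SignedForm

variable {I : Type*} [Fintype I] {a : I → I → ℤ}

theorem two_mul_sum_mul_sum_mul_of_symm (hsym : ∀ i j, a i j = a j i) (d n : I → ℤ) :
    2 * ∑ i, d i * (n i * ∑ j, a i j * n j) = ∑ i, ∑ j, (d i + d j) * a i j * (n i * n j) := by
  have hT : ∑ i, d i * (n i * ∑ j, a i j * n j) = ∑ i, ∑ j, d i * a i j * (n i * n j) :=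
    Finset.sum_congr rfl fun i _ => by rw [Finset.mul_sum, Finset.mul_sum]; ring_nf
  have hT' : ∑ i, ∑ j, d i * a i j * (n i * n j) = ∑ i, ∑ j, d j * a i j * (n i * n j) := by
    rw [Finset.sum_comm]
    exact Finset.sum_congr rfl fun i _ => Finset.sum_congr rfl fun j _ => by rw [hsym]; ring
  calc 2 * ∑ i, d i * (n i * ∑ j, a i j * n j)
      = ∑ i, ∑ j, d i * a i j * (n i * n j) + ∑ i, ∑ j, d j * a i j * (n i * n j) := by
        rw [two_mul, ← hT', hT]
    _ = ∑ i, ∑ j, (d i + d j) * a i j * (n i * n j) := by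
        simp only [← Finset.sum_add_distrib, add_mul]

theorem sum_sum_add_mul_of_add_eq_one {d : I → ℤ}
    (hd : ∀ i j, i ≠ j → a i j ≠ 0 → d i + d j = 1) (n : I → ℤ) :
    ∑ i, ∑ j, (d i + d j) * a i j * (n i * n j) =
      ∑ i, ∑ j, a i j * (n i * n j) + ∑ i, (2 * d i - 1) * a i i * (n i * n i) := by
  classical
  have hterm : ∀ i j, (d i + d j) * a i j =
      a i j + if i = j then (2 * d i - 1) * a i i else 0 := by
    intro i j
    by_cases hij : i = j
    · subst hij; simp only [if_true]; ring
    · by_cases ha : a i j = 0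
      · simp [ha, hij]
      · simp [hd i j hij ha, hij]
  simp [hterm, add_mul, Finset.sum_add_distrib]

theorem even_sum_mul_sum_mul_sub_one_add_sum (hsym : ∀ i j, a i j = a j i)
    (hdiag : ∀ i, a i i = 2) {d : I → ℤ} (hd : ∀ i j, i ≠ j → a i j ≠ 0 → d i + d j = 1) {n : I → ℤ}
    (hq : ∑ i, ∑ j, a i j * (n i * n j) = 2) :
    Even (∑ i, d i * (n i * ∑ j, a i j * n j) - (1 + ∑ i, n i)) := by
  have h2T := two_mul_sum_mul_sum_mul_of_symm hsym d n
  rw [sum_sum_add_mul_of_add_eq_one hd, hq] at h2T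
  simp only [hdiag] at h2T
  have hdiag_sum : ∑ i, (2 * d i - 1) * 2 * (n i * n i) =
      2 * ∑ i, (2 * (d i * n i * n i) - n i * (n i + 1)) + 2 * ∑ i, n i := by
    rw [Finset.mul_sum, Finset.mul_sum, ← Finset.sum_add_distrib]
    exact Finset.sum_congr rfl fun i _ => by ring
  rw [show ∑ i, d i * (n i * ∑ j, a i j * n j) - (1 + ∑ i, n i) =
      ∑ i, (2 * (d i * n i * n i) - n i * (n i + 1)) by linarith]
  exact Finset.even_sum _ fun i _ => (even_two_mul _).sub (Int.even_mul_succ_self (n i))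

end SignedForm

theorem stmt5_general {E I : Type*} [NormedAddCommGroup E] [InnerProductSpace ℝ E] [Fintype I]
    (b : I → E) (Φ : Set E) (hb : ∀ i, b i ∈ Φ)
    (hnorm : ∀ α ∈ Φ, ⟪α, α⟫ = 2)
    (a : I → I → ℤ) (hGram : ∀ i j, (a i j : ℝ) = ⟪b i, b j⟫)
    (c : I → ℤˣ) (hsign : ∀ i j, i ≠ j → a i j ≠ 0 → c i = -c j)
    (ε₀ : (I → ℤ) → (I → ℤ) → ℤˣ)
    (hε : ∀ n m : I → ℤ, ε₀ n m = ∏ i, c i ^ (n i * ∑ j, a i j * m j)) :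
    ∀ α ∈ Φ, ∀ n : I → ℤ, α = ∑ i, (n i : ℝ) • b i →
      ε₀ n n = -((-1 : ℤˣ) ^ (∑ i, n i)) ∧
      ε₀ n (-n) = -((-1 : ℤˣ) ^ (∑ i, n i)) := by
  intro α hα n hαn
  have hsym : ∀ i j, a i j = a j i := fun i j => by
    exact_mod_cast (hGram i j).trans ((real_inner_comm _ _).trans (hGram j i).symm)
  have hdiag : ∀ i, a i i = 2 := fun i => by exact_mod_cast (hGram i i).trans (hnorm _ (hb i))
  have hq : ∑ i, ∑ j, a i j * (n i * n j) = 2 := by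
    have h := hnorm α hα
    simp only [hαn, inner_sum_smul_sum_smul, ← hGram] at h
    exact_mod_cast h
  have hpar := even_sum_mul_sum_mul_sub_one_add_sum hsym hdiag
    (fun i j hij ha => Int.unitsLog_add_unitsLog_of_eq_neg (hsign i j hij ha)) hq
  have hεnn : ε₀ n n = (∑ i, Int.unitsLog (c i) * (n i * ∑ j, a i j * n j)).negOnePow := by
    simp only [hε, ← Int.prod_negOnePow_zpow, Int.negOnePow_unitsLog]
  rw [(Int.negOnePow_eq_iff _ _).2 hpar, Int.negOnePow_add, Int.negOnePow_one, neg_one_mul] at hεnn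
  have hεneg : ε₀ n (-n) = ε₀ n n := by
    simp only [hε, Pi.neg_apply, mul_neg, Finset.sum_neg_distrib, zpow_neg,
      Int.units_inv_eq_self]
  exact ⟨hεnn, hεneg.trans hεnn⟩

/-- In the setting of the sink-source cocycle ε₀ on the root lattice of a simply laced
root system Φ (with simple roots b i, Gram/Cartan matrix a, signs c_i with c_i = -c_j
on edges, ε₀(α_i,α_j) = c_i^{a_{ij}} extended bi-multiplicatively), for every root
α ∈ Φ with coordinate vector n one has ε₀(α,α) = ε₀(α,-α) = -(-1)^{ht(α)} where
ht(α) = Σ n_i. -/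
theorem stmt5 {E I : Type*} [NormedAddCommGroup E] [InnerProductSpace ℝ E] [Fintype I]
    (b : I → E) (hli : LinearIndependent ℝ b)
    (Φ : Set E) (hb : ∀ i, b i ∈ Φ)
    (hnorm : ∀ α ∈ Φ, ⟪α, α⟫ = 2)
    (hneg : ∀ α ∈ Φ, -α ∈ Φ)
    (hint : ∀ α ∈ Φ, ∀ β ∈ Φ, ∃ k : ℤ, ⟪α, β⟫ = k)
    (hrefl : ∀ α ∈ Φ, ∀ β ∈ Φ, β - ⟪α, β⟫ • α ∈ Φ)
    (a : I → I → ℤ) (hGram : ∀ i j, (a i j : ℝ) = ⟪b i, b j⟫)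
    (c : I → ℤˣ) (hsign : ∀ i j, i ≠ j → a i j ≠ 0 → c i = -c j)
    (ε₀ : (I → ℤ) → (I → ℤ) → ℤˣ)
    (hε : ∀ n m : I → ℤ, ε₀ n m = ∏ i, c i ^ (n i * ∑ j, a i j * m j)) :
    ∀ α ∈ Φ, ∀ n : I → ℤ, α = ∑ i, (n i : ℝ) • b i →
      ε₀ n n = -((-1 : ℤˣ) ^ (∑ i, n i)) ∧
      ε₀ n (-n) = -((-1 : ℤˣ) ^ (∑ i, n i)) :=
  stmt5_general b Φ hb hnorm a hGram c hsign ε₀ hε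
end

section
/- Let γ₁, γ₂, γ₃ be roots of a crystallographic root system Φ with γ₁ + γ₂ + γ₃ = 0. Then (q_{γ₁,γ₂}+1)/⟨γ₃,γ₃⟩ = (q_{γ₂,γ₃}+1)/⟨γ₁,γ₁⟩ = (q_{γ₃,γ₁}+1)/⟨γ₂,γ₂⟩, where q_{α,β} = max{m ≥ 0 : β - mα ∈ Φ}. -/
/-!
Put α = γ₁, β = γ₂. Since γ₃ = -(α + β), the number q_{γ₂,γ₃} + 1 is the number of steps up the
β-string through α, and each of the two equalities becomes
⟪α, α⟫ (p + 1) = ⟪γ₃, γ₃⟫ q', with p the number of steps down the α-string through β and q' the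
number of steps up the β-string through α.

If α and β are proportional, the triple is a rotation of (v, v, -2v) and every string is explicit.
Otherwise the reflection in α reverses the α-string through β, so 2⟪α, β⟫ / ⟪α, α⟫ = p - q, and the
strict Cauchy–Schwarz inequality bounds the length p + q of the string by 3; the same holds for the
β-string through α. The identity is then a finite check, which also uses that β - α ∈ Φ iff
α - β ∈ Φ and that two orthogonal roots whose sum is a root have the same length.
-/

open scoped RealInnerProductSpace

section AddCommGroup

variable {M : Type*} [AddCommGroup M] {Φ : Set M}

theorem exists_isGreatest_add_nsmul_mem [Module ℝ M] (hfin : Φ.Finite) {u v : M}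
    (hu : u ∈ Φ) (hv : v ≠ 0) : ∃ Q, IsGreatest {m : ℕ | u + m • v ∈ Φ} Q := by
  have hinj : Function.Injective fun m : ℕ => u + m • v := fun m n h =>
    Nat.cast_inj.mp <| smul_left_injective ℝ hv <| by
      simpa only [Nat.cast_smul_eq_nsmul] using add_left_cancel h
  exact (hfin.preimage hinj.injOn).bddAbove.exists_isGreatest_of_nonempty ⟨0, by simpa using hu⟩

theorem le_of_add_zsmul_mem {u v : M} {Q : ℕ} (hQ : IsGreatest {m : ℕ | u + m • v ∈ Φ} Q)
    {k : ℤ} (hk : u + k • v ∈ Φ) : k ≤ Q := by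
  rcases lt_or_ge k 0 with hk0 | hk0
  · omega
  · lift k to ℕ using hk0
    exact_mod_cast hQ.2 (by simpa using hk)

theorem neg_le_of_add_zsmul_mem {u v : M} {P : ℕ} (hP : IsGreatest {m : ℕ | u - m • v ∈ Φ} P)
    {k : ℤ} (hk : u + k • v ∈ Φ) : -k ≤ P := by
  refine le_of_add_zsmul_mem (v := -v) ?_ (by simpa using hk)
  simpa only [smul_neg, ← sub_eq_add_neg] using hP

theorem isGreatest_add_nsmul_of_sub_nsmul (hneg : ∀ α ∈ Φ, -α ∈ Φ) {α β γ : M}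
    (hsum : α + β + γ = 0) {r : ℕ} (hr : IsGreatest {m : ℕ | γ - m • β ∈ Φ} r) :
    IsGreatest {m : ℕ | α + m • β ∈ Φ} (r + 1) := by
  have hshift : ∀ k : ℕ, α + (k + 1) • β = -(γ - k • β) := fun k => by
    rw [eq_neg_of_add_eq_zero_right hsum, succ_nsmul]
    abel
  refine ⟨show α + (r + 1) • β ∈ Φ by simpa only [hshift] using hneg _ hr.1, ?_⟩
  rintro (_ | k) hk
  · omega
  · replace hk : -(γ - k • β) ∈ Φ := hshift k ▸ hk
    have := hr.2 (show γ - k • β ∈ Φ by simpa using hneg _ hk)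
    omega

end AddCommGroup

section InnerProductSpace

variable {E : Type*} [NormedAddCommGroup E] [InnerProductSpace ℝ E]

theorem real_inner_mul_inner_self_lt {x y : E} (h : LinearIndependent ℝ ![x, y]) :
    ⟪x, y⟫ * ⟪x, y⟫ < ⟪x, x⟫ * ⟪y, y⟫ := by
  have hx : x ≠ 0 := by simpa using h.ne_zero 0
  have hy : y ≠ 0 := by simpa using h.ne_zero 1
  refine (real_inner_mul_inner_self_le x y).lt_of_ne fun heq => ?_
  have habs : ‖⟪x, y⟫‖ = ‖x‖ * ‖y‖ := by
    rw [Real.norm_eq_abs, ← sq_eq_sq₀ (abs_nonneg _) (by positivity), sq_abs, mul_pow,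
      ← real_inner_self_eq_norm_sq, ← real_inner_self_eq_norm_sq, sq, heq]
  obtain ⟨r, -, rfl⟩ := (norm_inner_eq_norm_iff (𝕜 := ℝ) hx hy).1 habs
  exact (LinearIndependent.pair_iff' hx).1 h r rfl

theorem two_mul_inner_add_zsmul_div {v : E} (hv : v ≠ 0) (u : E) (k : ℤ) :
    2 * ⟪v, u + k • v⟫ / ⟪v, v⟫ = 2 * ⟪v, u⟫ / ⟪v, v⟫ + 2 * k := by
  have hvv : ⟪v, v⟫ ≠ 0 := (real_inner_self_pos.2 hv).ne'
  rw [inner_add_right, ← Int.cast_smul_eq_zsmul ℝ, real_inner_smul_right]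
  field_simp

variable {Φ : Set E}

theorem inner_self_pos_of_mem (h0 : (0 : E) ∉ Φ) {α : E} (hα : α ∈ Φ) : 0 < ⟪α, α⟫ :=
  real_inner_self_pos.2 (ne_of_mem_of_not_mem hα h0)

theorem add_zsmul_mem_of_reflection (h0 : (0 : E) ∉ Φ)
    (hrefl : ∀ α ∈ Φ, ∀ β ∈ Φ, β - (2 * ⟪α, β⟫ / ⟪α, α⟫) • α ∈ Φ)
    {u v : E} (hv : v ∈ Φ) {n : ℤ} (hn : 2 * ⟪v, u⟫ / ⟪v, v⟫ = n) {k : ℤ}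
    (hk : u + k • v ∈ Φ) : u + (-n - k) • v ∈ Φ := by
  have hr := hrefl v hv _ hk
  rw [two_mul_inner_add_zsmul_div (ne_of_mem_of_not_mem hv h0), hn] at hr
  convert hr using 1
  simp only [← Int.cast_smul_eq_zsmul ℝ]
  push_cast
  module

theorem two_mul_inner_eq_sub_mul (h0 : (0 : E) ∉ Φ)
    (hint : ∀ α ∈ Φ, ∀ β ∈ Φ, ∃ k : ℤ, 2 * ⟪α, β⟫ / ⟪α, α⟫ = k)
    (hrefl : ∀ α ∈ Φ, ∀ β ∈ Φ, β - (2 * ⟪α, β⟫ / ⟪α, α⟫) • α ∈ Φ)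
    {u v : E} (hu : u ∈ Φ) (hv : v ∈ Φ) {P Q : ℕ}
    (hP : IsGreatest {m : ℕ | u - m • v ∈ Φ} P) (hQ : IsGreatest {m : ℕ | u + m • v ∈ Φ} Q) :
    2 * ⟪v, u⟫ = ((P : ℝ) - Q) * ⟪v, v⟫ := by
  obtain ⟨n, hn⟩ := hint v hv u hu
  have htop := neg_le_of_add_zsmul_mem hP
    (add_zsmul_mem_of_reflection h0 hrefl hv hn (k := Q) (by simpa using hQ.1))
  have hbot := le_of_add_zsmul_mem hQ
    (add_zsmul_mem_of_reflection h0 hrefl hv hn (k := -P) (by simpa [sub_eq_add_neg] using hP.1))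
  obtain rfl : n = P - Q := by omega
  rw [div_eq_iff (inner_self_pos_of_mem h0 hv).ne'] at hn
  rw [hn]
  push_cast
  ring

theorem add_le_three (h0 : (0 : E) ∉ Φ)
    (hint : ∀ α ∈ Φ, ∀ β ∈ Φ, ∃ k : ℤ, 2 * ⟪α, β⟫ / ⟪α, α⟫ = k)
    (hrefl : ∀ α ∈ Φ, ∀ β ∈ Φ, β - (2 * ⟪α, β⟫ / ⟪α, α⟫) • α ∈ Φ)
    {u v : E} (hu : u ∈ Φ) (hv : v ∈ Φ) (hlin : LinearIndependent ℝ ![u, v]) {P Q : ℕ}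
    (hP : IsGreatest {m : ℕ | u - m • v ∈ Φ} P) (hQ : IsGreatest {m : ℕ | u + m • v ∈ Φ} Q) :
    P + Q ≤ 3 := by
  set w := u + Q • v with hw_def
  have hw : w ∈ Φ := hQ.1
  have hvv := inner_self_pos_of_mem h0 hv
  have hww := inner_self_pos_of_mem h0 hw
  have hvw : 2 * ⟪v, w⟫ = (P + Q) * ⟪v, v⟫ := by
    rw [hw_def, inner_add_right, ← Nat.cast_smul_eq_nsmul ℝ, real_inner_smul_right]
    linarith [two_mul_inner_eq_sub_mul h0 hint hrefl hu hv hP hQ]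
  obtain ⟨m, hm⟩ := hint w hw v hv
  rw [div_eq_iff hww.ne', real_inner_comm] at hm
  have hcs := real_inner_mul_inner_self_lt (x := v) (y := w) <| by
    rwa [LinearIndependent.pair_symm_iff, hw_def, ← Nat.cast_smul_eq_nsmul ℝ,
      LinearIndependent.pair_add_smul_left_iff]
  -- The Cartan integers of the independent pair `(v, w)` are `P + Q` and `m`, with product `< 4`.
  by_contra! h4
  have h4' : (4 : ℝ) ≤ P + Q := by exact_mod_cast h4
  have hm1 : (1 : ℝ) ≤ m := by
    have : (0 : ℝ) < m := pos_of_mul_pos_left (by nlinarith) hww.le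
    exact_mod_cast (show (0 : ℤ) < m by exact_mod_cast this)
  have hsq : 4 * (⟪v, w⟫ * ⟪v, w⟫) = ((P + Q) * m) * (⟪v, v⟫ * ⟪w, w⟫) := by
    linear_combination (2 * ⟪v, w⟫) * hvw + ((P + Q) * ⟪v, v⟫) * hm
  nlinarith [mul_le_mul h4' hm1 zero_le_one (by linarith), mul_pos hvv hww]

theorem inner_self_eq_of_inner_eq_zero (h0 : (0 : E) ∉ Φ)
    (hint : ∀ α ∈ Φ, ∀ β ∈ Φ, ∃ k : ℤ, 2 * ⟪α, β⟫ / ⟪α, α⟫ = k)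
    {α β : E} (hα : α ∈ Φ) (hβ : β ∈ Φ) (hαβ : α + β ∈ Φ) (h : ⟪α, β⟫ = 0) :
    ⟪α, α⟫ = ⟪β, β⟫ := by
  have ha := inner_self_pos_of_mem h0 hα
  have hb := inner_self_pos_of_mem h0 hβ
  obtain ⟨k, hk⟩ := hint _ hαβ α hα
  simp only [inner_add_left, inner_add_right, h, real_inner_comm α β] at hk
  rw [div_eq_iff (by linarith)] at hk
  obtain rfl : k = 1 := by
    have hk0 : (0 : ℝ) < k := by nlinarith
    have hk2 : (k : ℝ) < 2 := by nlinarith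
    have : 0 < k := by exact_mod_cast hk0
    have : k < 2 := by exact_mod_cast hk2
    omega
  push_cast at hk
  linarith

theorem smul_mem_cases (h0 : (0 : E) ∉ Φ)
    (hint : ∀ α ∈ Φ, ∀ β ∈ Φ, ∃ k : ℤ, 2 * ⟪α, β⟫ / ⟪α, α⟫ = k)
    {α : E} (hα : α ∈ Φ) {s : ℝ} (hs : s • α ∈ Φ) :
    s = 1 ∨ s = -1 ∨ s = 2 ∨ s = -2 ∨ s = 1 / 2 ∨ s = -1 / 2 := by
  have ha := inner_self_pos_of_mem h0 hα
  have hs0 : s ≠ 0 := by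
    rintro rfl
    exact h0 (by simpa using hs)
  obtain ⟨k, hk⟩ := hint α hα _ hs
  obtain ⟨l, hl⟩ := hint _ hs α hα
  simp only [real_inner_smul_left, real_inner_smul_right] at hk hl
  field_simp at hk hl
  have hkl : k * l = 4 := by
    exact_mod_cast (show (k * l : ℝ) = 4 by linear_combination (-(l : ℝ)) * hk - 2 * hl)
  have hk4 : k ≤ 4 := Int.le_of_dvd (by norm_num) ⟨l, hkl.symm⟩
  have hk4' : -4 ≤ k := by
    have := Int.le_of_dvd (by norm_num) (neg_dvd.2 ⟨l, hkl.symm⟩)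
    omega
  obtain rfl : s = k / 2 := by linarith
  interval_cases k <;> first | omega | norm_num

theorem abs_le_two_of_smul_mem (h0 : (0 : E) ∉ Φ)
    (hint : ∀ α ∈ Φ, ∀ β ∈ Φ, ∃ k : ℤ, 2 * ⟪α, β⟫ / ⟪α, α⟫ = k)
    {α : E} (hα : α ∈ Φ) {s : ℝ} (hs : s • α ∈ Φ) : |s| ≤ 2 := by
  rcases smul_mem_cases h0 hint hα hs with rfl | rfl | rfl | rfl | rfl | rfl <;>
    norm_num [abs_le]

theorem isGreatest_sub_nsmul_self (h0 : (0 : E) ∉ Φ)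
    (hint : ∀ α ∈ Φ, ∀ β ∈ Φ, ∃ k : ℤ, 2 * ⟪α, β⟫ / ⟪α, α⟫ = k)
    {v : E} (hv : v ∈ Φ) (h2v : (-2 : ℝ) • v ∈ Φ) :
    IsGreatest {m : ℕ | v - m • v ∈ Φ} 3 := by
  refine ⟨show v - 3 • v ∈ Φ by convert h2v using 1; module, fun m hm => ?_⟩
  have hs : (1 - m : ℝ) • v ∈ Φ := by rwa [sub_smul, one_smul, Nat.cast_smul_eq_nsmul]
  have := (abs_le.1 (abs_le_two_of_smul_mem h0 hint hv hs)).1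
  exact_mod_cast (by linarith : (m : ℝ) ≤ 3)

theorem isGreatest_neg_two_smul_sub_nsmul (h0 : (0 : E) ∉ Φ)
    (hint : ∀ α ∈ Φ, ∀ β ∈ Φ, ∃ k : ℤ, 2 * ⟪α, β⟫ / ⟪α, α⟫ = k)
    {v : E} (hv : v ∈ Φ) (h2v : (-2 : ℝ) • v ∈ Φ) :
    IsGreatest {m : ℕ | (-2 : ℝ) • v - m • v ∈ Φ} 0 := by
  refine ⟨by simpa using h2v, fun m hm => ?_⟩
  have hs : (-2 - m : ℝ) • v ∈ Φ := by rwa [sub_smul, Nat.cast_smul_eq_nsmul]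
  have := (abs_le.1 (abs_le_two_of_smul_mem h0 hint hv hs)).1
  exact_mod_cast (by linarith : (m : ℝ) ≤ 0)

theorem isGreatest_sub_nsmul_neg_two_smul (h0 : (0 : E) ∉ Φ)
    (hint : ∀ α ∈ Φ, ∀ β ∈ Φ, ∃ k : ℤ, 2 * ⟪α, β⟫ / ⟪α, α⟫ = k)
    {v : E} (hv : v ∈ Φ) :
    IsGreatest {m : ℕ | v - m • ((-2 : ℝ) • v) ∈ Φ} 0 := by
  refine ⟨by simpa using hv, fun m hm => ?_⟩
  replace hm : v - m • ((-2 : ℝ) • v) ∈ Φ := hm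
  have hs : (1 + 2 * m : ℝ) • v ∈ Φ := by
    convert hm using 1
    rw [← Nat.cast_smul_eq_nsmul ℝ]
    module
  have := (abs_le.1 (abs_le_two_of_smul_mem h0 hint hv hs)).2
  have : m < 1 := by exact_mod_cast (by linarith : (m : ℝ) < 1)
  omega

theorem exists_collinear_triple (h0 : (0 : E) ∉ Φ)
    (hint : ∀ α ∈ Φ, ∀ β ∈ Φ, ∃ k : ℤ, 2 * ⟪α, β⟫ / ⟪α, α⟫ = k)
    {γ₁ γ₂ γ₃ : E} (h1 : γ₁ ∈ Φ) (h2 : γ₂ ∈ Φ) (h3 : γ₃ ∈ Φ) (hsum : γ₁ + γ₂ + γ₃ = 0)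
    (hlin : ¬LinearIndependent ℝ ![γ₁, γ₂]) :
    ∃ v ∈ Φ, (-2 : ℝ) • v ∈ Φ ∧
      (γ₁ = v ∧ γ₂ = v ∧ γ₃ = (-2 : ℝ) • v ∨ γ₁ = v ∧ γ₂ = (-2 : ℝ) • v ∧ γ₃ = v ∨
        γ₁ = (-2 : ℝ) • v ∧ γ₂ = v ∧ γ₃ = v) := by
  obtain ⟨t, rfl⟩ : ∃ t : ℝ, t • γ₁ = γ₂ := by
    simpa [LinearIndependent.pair_iff' (ne_of_mem_of_not_mem h1 h0)] using hlin
  obtain rfl : γ₃ = (-(1 + t)) • γ₁ := by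
    rw [eq_neg_of_add_eq_zero_right hsum]
    module
  rcases smul_mem_cases h0 hint h1 h2 with rfl | rfl | rfl | rfl | rfl | rfl <;>
    rcases smul_mem_cases h0 hint h1 h3 with h | h | h | h | h | h <;> norm_num at h
  · exact ⟨γ₁, h1, by convert h3 using 2; norm_num, Or.inl ⟨rfl, one_smul _ _, by norm_num⟩⟩
  · exact ⟨γ₁, h1, h2, Or.inr (Or.inl ⟨rfl, rfl, by norm_num⟩)⟩
  · refine ⟨_, h2, by rwa [smul_smul, show (-2 : ℝ) * (-1 / 2) = 1 by norm_num, one_smul],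
      Or.inr (Or.inr ⟨?_, rfl, ?_⟩)⟩ <;> module

/- Here `a, b, x` stand for `⟪α, α⟫, ⟪β, β⟫, ⟪α, β⟫`, and `(p, q)`, `(p', q')` for the numbers of
steps down and up along the α-string through β and along the β-string through α. -/
theorem mul_add_one_eq_of_string_bounds {p q p' q' : ℕ} {a b x : ℝ} (ha : 0 < a) (hb : 0 < b)
    (hq : 1 ≤ q) (hq' : 1 ≤ q') (hpq : p + q ≤ 3) (hpq' : p' + q' ≤ 3)
    (hn : 2 * x = (p - q) * a) (hm : 2 * x = (p' - q') * b) (hcs : x * x < a * b)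
    (hp : p = 1 → p' ≠ 0) (hp' : p' = 1 → p ≠ 0) (horth : x = 0 → a = b) :
    a * (p + 1) = (a + b + 2 * x) * q' := by
  obtain ⟨hp2, hq3, hp2', hq3'⟩ : p ≤ 2 ∧ q ≤ 3 ∧ p' ≤ 2 ∧ q' ≤ 3 := by omega
  interval_cases p <;> interval_cases q <;> interval_cases p' <;> interval_cases q' <;>
    first
    | omega
    | (push_cast at hn hm ⊢; first | nlinarith | nlinarith [horth (by linarith)])

theorem inner_self_mul_add_one_eq_of_linearIndependent (hfin : Φ.Finite) (h0 : (0 : E) ∉ Φ)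
    (hneg : ∀ α ∈ Φ, -α ∈ Φ)
    (hint : ∀ α ∈ Φ, ∀ β ∈ Φ, ∃ k : ℤ, 2 * ⟪α, β⟫ / ⟪α, α⟫ = k)
    (hrefl : ∀ α ∈ Φ, ∀ β ∈ Φ, β - (2 * ⟪α, β⟫ / ⟪α, α⟫) • α ∈ Φ)
    {α β γ : E} (hα : α ∈ Φ) (hβ : β ∈ Φ) (hγ : γ ∈ Φ) (hsum : α + β + γ = 0)
    (hlin : LinearIndependent ℝ ![α, β]) {p r : ℕ}
    (hp : IsGreatest {m : ℕ | β - m • α ∈ Φ} p) (hr : IsGreatest {m : ℕ | γ - m • β ∈ Φ} r) :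
    ⟪α, α⟫ * (p + 1) = ⟪γ, γ⟫ * (r + 1) := by
  have hγ' : γ = -(α + β) := eq_neg_of_add_eq_zero_right hsum
  obtain ⟨q, hq⟩ := exists_isGreatest_add_nsmul_mem hfin hβ (ne_of_mem_of_not_mem hα h0)
  obtain ⟨p', hp'⟩ : ∃ p', IsGreatest {m : ℕ | α - m • β ∈ Φ} p' := by
    simpa only [smul_neg, ← sub_eq_add_neg] using
      exists_isGreatest_add_nsmul_mem hfin hα (neg_ne_zero.2 (ne_of_mem_of_not_mem hβ h0))
  have hq' := isGreatest_add_nsmul_of_sub_nsmul hneg hsum hr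
  have hαβ : α + β ∈ Φ := by simpa [hγ'] using hneg _ hγ
  have hq1 : 1 ≤ q := hq.2 (show β + 1 • α ∈ Φ by rwa [one_smul, add_comm])
  have hpp' : p = 1 → p' ≠ 0 := by
    rintro rfl rfl
    have := hp'.2 (show α - 1 • β ∈ Φ by simpa using hneg _ hp.1)
    omega
  have hp'p : p' = 1 → p ≠ 0 := by
    rintro rfl rfl
    have := hp.2 (show β - 1 • α ∈ Φ by simpa using hneg _ hp'.1)
    omega
  have hγγ : ⟪γ, γ⟫ = ⟪α, α⟫ + ⟪β, β⟫ + 2 * ⟪α, β⟫ := by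
    rw [hγ']
    simp only [inner_neg_left, inner_neg_right, inner_add_left, inner_add_right,
      real_inner_comm α β]
    ring
  have key := mul_add_one_eq_of_string_bounds (inner_self_pos_of_mem h0 hα)
    (inner_self_pos_of_mem h0 hβ) hq1 (Nat.le_add_left 1 r)
    (add_le_three h0 hint hrefl hβ hα (LinearIndependent.pair_symm_iff.1 hlin) hp hq)
    (add_le_three h0 hint hrefl hα hβ hlin hp' hq')
    (two_mul_inner_eq_sub_mul h0 hint hrefl hβ hα hp hq)
    (by rw [real_inner_comm]; exact two_mul_inner_eq_sub_mul h0 hint hrefl hα hβ hp' hq')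
    (real_inner_mul_inner_self_lt hlin) hpp' hp'p
    (inner_self_eq_of_inner_eq_zero h0 hint hα hβ hαβ)
  rw [hγγ]
  exact_mod_cast key

end InnerProductSpace

/-- (Casselman) Let γ₁, γ₂, γ₃ be roots of a crystallographic root system Φ with
γ₁ + γ₂ + γ₃ = 0.  Then (q_{γ₁,γ₂}+1)/⟨γ₃,γ₃⟩ = (q_{γ₂,γ₃}+1)/⟨γ₁,γ₁⟩
= (q_{γ₃,γ₁}+1)/⟨γ₂,γ₂⟩, where q_{α,β} = max{m ≥ 0 : β - mα ∈ Φ}. -/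
theorem stmt8 {E : Type*} [NormedAddCommGroup E] [InnerProductSpace ℝ E]
    (Φ : Set E) (hfin : Φ.Finite) (h0 : (0 : E) ∉ Φ)
    (hneg : ∀ α ∈ Φ, -α ∈ Φ)
    (hint : ∀ α ∈ Φ, ∀ β ∈ Φ, ∃ k : ℤ, 2 * ⟪α, β⟫ / ⟪α, α⟫ = k)
    (hrefl : ∀ α ∈ Φ, ∀ β ∈ Φ, β - (2 * ⟪α, β⟫ / ⟪α, α⟫) • α ∈ Φ)
    (γ₁ γ₂ γ₃ : E) (h1 : γ₁ ∈ Φ) (h2 : γ₂ ∈ Φ) (h3 : γ₃ ∈ Φ)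
    (hsum : γ₁ + γ₂ + γ₃ = 0)
    (q12 q23 q31 : ℕ)
    (hq12 : IsGreatest {m : ℕ | γ₂ - m • γ₁ ∈ Φ} q12)
    (hq23 : IsGreatest {m : ℕ | γ₃ - m • γ₂ ∈ Φ} q23)
    (hq31 : IsGreatest {m : ℕ | γ₁ - m • γ₃ ∈ Φ} q31) :
    ((q12 : ℝ) + 1) / ⟪γ₃, γ₃⟫ = ((q23 : ℝ) + 1) / ⟪γ₁, γ₁⟫ ∧
    ((q23 : ℝ) + 1) / ⟪γ₁, γ₁⟫ = ((q31 : ℝ) + 1) / ⟪γ₂, γ₂⟫ := by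
  by_cases hlin : LinearIndependent ℝ ![γ₁, γ₂]
  · have hlin' : LinearIndependent ℝ ![γ₂, γ₃] := by
      rwa [eq_neg_of_add_eq_zero_right hsum, LinearIndependent.pair_neg_right_iff, add_comm,
        LinearIndependent.pair_add_right_iff, LinearIndependent.pair_symm_iff]
    have key₁ := inner_self_mul_add_one_eq_of_linearIndependent hfin h0 hneg hint hrefl
      h1 h2 h3 hsum hlin hq12 hq23
    have key₂ := inner_self_mul_add_one_eq_of_linearIndependent hfin h0 hneg hint hrefl
      h2 h3 h1 (by rw [← hsum]; abel) hlin' hq23 hq31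
    rw [div_eq_div_iff (inner_self_pos_of_mem h0 h3).ne' (inner_self_pos_of_mem h0 h1).ne',
      div_eq_div_iff (inner_self_pos_of_mem h0 h1).ne' (inner_self_pos_of_mem h0 h2).ne']
    constructor <;> linarith
  · obtain ⟨v, hv, h2v, hconf⟩ := exists_collinear_triple h0 hint h1 h2 h3 hsum hlin
    have hA := isGreatest_sub_nsmul_self h0 hint hv h2v
    have hB := isGreatest_neg_two_smul_sub_nsmul h0 hint hv h2v
    have hC := isGreatest_sub_nsmul_neg_two_smul h0 hint hv
    have hvv := inner_self_pos_of_mem h0 hv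
    have hval : ((3 : ℕ) + 1 : ℝ) / ⟪(-2 : ℝ) • v, (-2 : ℝ) • v⟫ = ((0 : ℕ) + 1 : ℝ) / ⟪v, v⟫ := by
      rw [real_inner_smul_left, real_inner_smul_right]
      field_simp
      norm_num
    rcases hconf with ⟨rfl, rfl, rfl⟩ | ⟨rfl, rfl, rfl⟩ | ⟨rfl, rfl, rfl⟩
    · rw [hq12.unique hA, hq23.unique hB, hq31.unique hC]
      exact ⟨hval, rfl⟩
    · rw [hq12.unique hB, hq23.unique hC, hq31.unique hA]
      exact ⟨rfl, hval.symm⟩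
    · rw [hq12.unique hC, hq23.unique hA, hq31.unique hB]
      exact ⟨hval.symm, hval⟩
end

section
/- Let g be a simple Lie algebra with a special Chevalley system {e_α : α ∈ Φ} (i.e., [e_{α_i}, e_{-α_i}] = h_i and there are signs c_i ∈ {±1} such that [e_{α_i}, e_α] = c_i(q_{α_i,α}+1) e_{α+α_i} for α ∈ Φ⁺ with α+α_i ∈ Φ, and [e_{-α_i}, e_α] = c_i(p_{α_i,α}+1) e_{α-α_i} for α ∈ Φ⁻ with α-α_i ∈ Φ). Then for any i ≠ j in I with a_{ij} ≠ 0, one has c_i = -c_j. -/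
/-!
Since `α_j - α_i` is not a root and root strings are unbroken, `q_{α_i,α_j} = 0`; hence
`a_{ij} ≠ 0` forces `p_{α_i,α_j} ≥ 1`, i.e. `α_i + α_j ∈ Φ`. Both `[e_{α_i}, e_{α_j}]` and
`[e_{α_j}, e_{α_i}]` are then `c_i e_{α_i+α_j}` and `c_j e_{α_i+α_j}`, and anti-symmetry of the
bracket gives `c_i + c_j = 0`.
-/

section RootString

variable {E : Type*} [AddCommGroup E] {Φ : Set E} {q p : E → E → ℕ} {β γ : E}

theorem stringDepth_eq_zero_of_sub_notMem
    (hγ : γ ∈ Φ) (hq : IsGreatest {m : ℕ | γ - m • β ∈ Φ} (q β γ))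
    (hp : ∀ δ ∈ Φ, IsGreatest {m : ℕ | δ + m • β ∈ Φ} (p β δ))
    (hstring : ∀ δ ∈ Φ, ∀ m : ℕ, m ≤ p β δ → δ + m • β ∈ Φ)
    (hγβ : γ - β ∉ Φ) : q β γ = 0 := by
  set δ := γ - q β γ • β
  have hδ : δ ∈ Φ := hq.1
  have hδγ : δ + q β γ • β = γ := sub_add_cancel _ _
  have hle : q β γ ≤ p β δ := (hp δ hδ).2 (show δ + q β γ • β ∈ Φ by rwa [hδγ])
  rcases hq' : q β γ with _ | m
  · rfl
  · refine absurd ?_ hγβ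
    have hm := hstring δ hδ m (by omega)
    rwa [show δ + m • β = γ - β by rw [← hδγ, hq', succ_nsmul]; abel] at hm

end RootString

theorem add_eq_zero_of_lie_eq_smul {K L : Type*} [Field K] [CharZero K] [LieRing L]
    [LieAlgebra K L] {x y z : L} {a b : ℤ} (hxy : ⁅x, y⁆ = (a : K) • z)
    (hyx : ⁅y, x⁆ = (b : K) • z) (hz : z ≠ 0) : a + b = 0 := by
  have h : ((a + b : ℤ) : K) • z = 0 := by
    rw [Int.cast_add, add_smul, ← hxy, ← hyx, ← lie_skew x y, neg_add_cancel]
  exact_mod_cast (smul_eq_zero.mp h).resolve_right hz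

theorem stmt9_general {E L I : Type*} [AddCommGroup E]
    [LieRing L] [LieAlgebra ℂ L]
    (Φ Φp : Set E) (hsub : Φp ⊆ Φ)
    (s : I → E) (hs : ∀ i, s i ∈ Φp)
    (e : E → L)
    (he : ∀ β ∈ Φ, e β ≠ 0)
    (q p : E → E → ℕ)
    (hq : ∀ β ∈ Φ, ∀ γ ∈ Φ, IsGreatest {m : ℕ | γ - m • β ∈ Φ} (q β γ))
    (hp : ∀ β ∈ Φ, ∀ γ ∈ Φ, IsGreatest {m : ℕ | γ + m • β ∈ Φ} (p β γ))
    (c : I → ℤ)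
    (ha : ∀ i, ∀ β ∈ Φp, β + s i ∈ Φ →
      ⁅e (s i), e β⁆ = ((c i * ((q (s i) β : ℤ) + 1) : ℤ) : ℂ) • e (β + s i))
    (a : I → I → ℤ)
    (hdiff : ∀ i j, i ≠ j → s i - s j ∉ Φ)
    (haij : ∀ i j, i ≠ j → a i j = (q (s i) (s j) : ℤ) - p (s i) (s j))
    (hstring : ∀ i, ∀ β ∈ Φ, ∀ m : ℕ, m ≤ p (s i) β → β + m • s i ∈ Φ)
    (i j : I) (hij : i ≠ j) (hne : a i j ≠ 0) :
    c i = -c j := by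
  have hq0 : ∀ k l, k ≠ l → q (s k) (s l) = 0 := fun k l hkl =>
    stringDepth_eq_zero_of_sub_notMem (hsub (hs l)) (hq _ (hsub (hs k)) _ (hsub (hs l)))
      (hp _ (hsub (hs k))) (hstring k) (hdiff l k hkl.symm)
  have hp1 : 1 ≤ p (s i) (s j) := by
    have := haij i j hij
    rw [hq0 i j hij] at this
    omega
  have hroot : s j + s i ∈ Φ := by simpa using hstring i _ (hsub (hs j)) 1 hp1
  have hij' := ha i (s j) (hs j) hroot
  have hji := ha j (s i) (hs i) (add_comm (s j) (s i) ▸ hroot)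
  rw [add_comm (s i)] at hji
  have hsum := add_eq_zero_of_lie_eq_smul hij' hji (he _ hroot)
  rw [hq0 i j hij, hq0 j i hij.symm] at hsum
  omega

/-- Let g be a simple Lie algebra over ℂ with a special Chevalley system {e_α}
(with simple roots s i, signs c_i ∈ {±1}).  Then for i ≠ j with a_{ij} ≠ 0 one has
c_i = -c_j. -/
theorem stmt9 {E L I : Type*} [AddCommGroup E] [Module ℝ E]
    [LieRing L] [LieAlgebra ℂ L]
    (Φ Φp : Set E) (hsub : Φp ⊆ Φ)
    (hsplit : ∀ β, β ∈ Φ ↔ β ∈ Φp ∨ -β ∈ Φp)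
    (s : I → E) (hs : ∀ i, s i ∈ Φp)
    (e : E → L) (hcor : I → L)
    (he : ∀ β ∈ Φ, e β ≠ 0)
    (q p : E → E → ℕ)
    (hq : ∀ β ∈ Φ, ∀ γ ∈ Φ, IsGreatest {m : ℕ | γ - m • β ∈ Φ} (q β γ))
    (hp : ∀ β ∈ Φ, ∀ γ ∈ Φ, IsGreatest {m : ℕ | γ + m • β ∈ Φ} (p β γ))
    (c : I → ℤ) (hc : ∀ i, c i = 1 ∨ c i = -1)
    (hco : ∀ i, ⁅e (s i), e (-(s i))⁆ = hcor i)
    (ha : ∀ i, ∀ β ∈ Φp, β + s i ∈ Φ →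
      ⁅e (s i), e β⁆ = ((c i * ((q (s i) β : ℤ) + 1) : ℤ) : ℂ) • e (β + s i))
    (hb : ∀ i, ∀ β ∈ Φ, -β ∈ Φp → β - s i ∈ Φ →
      ⁅e (-(s i)), e β⁆ = ((c i * ((p (s i) β : ℤ) + 1) : ℤ) : ℂ) • e (β - s i))
    (a : I → I → ℤ)
    (hdiff : ∀ i j, i ≠ j → s i - s j ∉ Φ)
    (haij : ∀ i j, i ≠ j → a i j = (q (s i) (s j) : ℤ) - p (s i) (s j))
    (hstring : ∀ i, ∀ β ∈ Φ, ∀ m : ℕ, m ≤ p (s i) β → β + m • s i ∈ Φ)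
    (i j : I) (hij : i ≠ j) (hne : a i j ≠ 0) :
    c i = -c j :=
  stmt9_general Φ Φp hsub s hs e he q p hq hp c ha a hdiff haij hstring i j hij hne
end

section
/- In type A_r, with the alternating orientation where vertex i is a source iff i is even (so the oriented edge set is Î = {(2,1),(2,3),(4,3),(4,5),...}), define ρ⃗(α,β) = -Σ_{(i,j)∈Î} n_i m_j for α = Σ n_i α_i, β = Σ m_j α_j in the root lattice. Then for positive roots α, β with α + β a root, ρ⃗(α,β) - ρ⃗(β,α) ∈ {1, -1}. -/
/-- The positive root α_{ij} = α_i + ... + α_{j-1} of type A_r, in simple-root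
coordinates. -/
def Aroot (i j : ℕ) : ℕ → ℤ := fun t => if i ≤ t ∧ t < j then 1 else 0

/-- The set of roots of type A_r. -/
def PhiA (r : ℕ) : Set (ℕ → ℤ) :=
  {v | ∃ i j, 1 ≤ i ∧ i < j ∧ j ≤ r + 1 ∧ (v = Aroot i j ∨ v = -Aroot i j)}

/-- The set of positive roots of type A_r. -/
def PhiAPos (r : ℕ) : Set (ℕ → ℤ) :=
  {v | ∃ i j, 1 ≤ i ∧ i < j ∧ j ≤ r + 1 ∧ v = Aroot i j}

/-- ρ⃗(α,β) = -Σ_{(i,j)∈Î} n_i m_j for the alternating orientation of type A_r,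
where Î consists of the pairs (i,j) with 1 ≤ i,j ≤ r, i even and |i - j| = 1. -/
def rhoA (r : ℕ) (v w : ℕ → ℤ) : ℤ :=
  -∑ i ∈ Finset.Icc 1 r, ∑ j ∈ Finset.Icc 1 r,
    if i % 2 = 0 ∧ (j = i + 1 ∨ i = j + 1) then v i * w j else 0

/-!
A sum of two positive roots α_{ij} + α_{kl} of type A is a root only when the two intervals
[i, j) and [k, l) are adjacent, say j = k. Then the supports of α_{ij} and α_{jl} are disjoint
and the only oriented edge joining them is the one between j - 1 and j, so the antisymmetrised
form ρ⃗(α_{ij}, α_{jl}) - ρ⃗(α_{jl}, α_{ij}) picks up a single term, whose sign is fixed by the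
orientation of that edge, i.e. by the parity of j.
-/

namespace Aroot

theorem add_ne_neg {i j k l a b : ℕ} (hij : i < j) : Aroot i j + Aroot k l ≠ -Aroot a b := by
  intro h
  have hi := congrFun h i
  simp only [Aroot, Pi.add_apply, Pi.neg_apply] at hi
  split_ifs at hi <;> omega

theorem adjacent_of_add_eq {i j k l a b : ℕ} (hij : i < j) (hkl : k < l)
    (h : Aroot i j + Aroot k l = Aroot a b) : j = k ∨ l = i := by
  have H : ∀ t, (if i ≤ t ∧ t < j then (1 : ℤ) else 0) + (if k ≤ t ∧ t < l then 1 else 0)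
      = if a ≤ t ∧ t < b then 1 else 0 := fun t => by
    simpa only [Aroot, Pi.add_apply] using congrFun h t
  have hi : a ≤ i ∧ i < b := by have h := H i; split_ifs at h <;> omega
  have hk : a ≤ k ∧ k < b := by have h := H k; split_ifs at h <;> omega
  by_contra! hne
  rcases le_or_gt j k with hjk | hkj
  · have h := H j; split_ifs at h <;> omega
  rcases le_or_gt l i with hli | hil
  · have h := H l; split_ifs at h <;> omega
  -- the intervals [i, j) and [k, l) overlap, so the sum takes the value 2 at max i k
  rcases le_total i k with hik | hki
  · have h := H k; split_ifs at h <;> omega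
  · have h := H i; split_ifs at h <;> omega

theorem adjacent_of_add_mem_PhiA {r i j k l : ℕ} (hij : i < j) (hkl : k < l)
    (h : Aroot i j + Aroot k l ∈ PhiA r) : j = k ∨ l = i := by
  obtain ⟨a, b, -, -, -, hpos | hneg⟩ := h
  · exact adjacent_of_add_eq hij hkl hpos
  · exact absurd hneg (add_ne_neg hij)

end Aroot

theorem rhoA_sub_rhoA_Aroot_adjacent {r i j l : ℕ} (hi : 1 ≤ i) (hij : i < j) (hjl : j < l)
    (hl : l ≤ r + 1) :
    rhoA r (Aroot i j) (Aroot j l) - rhoA r (Aroot j l) (Aroot i j) = (-1) ^ j := by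
  have hj : j ∈ Finset.Icc 1 r := Finset.mem_Icc.mpr ⟨by omega, by omega⟩
  have hj' : j - 1 ∈ Finset.Icc 1 r := Finset.mem_Icc.mpr ⟨by omega, by omega⟩
  have hterm : ∀ p ∈ Finset.Icc 1 r, ∀ q ∈ Finset.Icc 1 r,
      ((if p % 2 = 0 ∧ (q = p + 1 ∨ p = q + 1) then Aroot j l p * Aroot i j q else 0) -
        if p % 2 = 0 ∧ (q = p + 1 ∨ p = q + 1) then Aroot i j p * Aroot j l q else 0) =
      if j % 2 = 0 then (if p = j ∧ q = j - 1 then 1 else 0)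
      else (if p = j - 1 ∧ q = j then -1 else 0) := by
    intro p hp q hq
    simp only [Finset.mem_Icc] at hp hq
    simp only [Aroot]
    split_ifs <;> omega
  simp only [rhoA, neg_sub_neg, ← Finset.sum_sub_distrib]
  rw [Finset.sum_congr rfl fun p hp => Finset.sum_congr rfl fun q hq => hterm p hp q hq]
  rcases Nat.even_or_odd j with he | ho
  · simp [Nat.even_iff.mp he, he.neg_one_pow, ite_and, hj, hj']
  · simp [Nat.odd_iff.mp ho, ho.neg_one_pow, ite_and, hj, hj']

/-- In type A_r with the alternating orientation, for positive roots α, β with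
α + β a root, ρ⃗(α,β) - ρ⃗(β,α) ∈ {1, -1}. -/
theorem stmt14 (r : ℕ) (α β : ℕ → ℤ)
    (hα : α ∈ PhiAPos r) (hβ : β ∈ PhiAPos r) (hs : α + β ∈ PhiA r) :
    rhoA r α β - rhoA r β α = 1 ∨ rhoA r α β - rhoA r β α = -1 := by
  obtain ⟨i, j, hi, hij, hj, rfl⟩ := hα
  obtain ⟨k, l, hk, hkl, hl, rfl⟩ := hβ
  rcases Aroot.adjacent_of_add_mem_PhiA hij hkl hs with rfl | rfl
  · rw [rhoA_sub_rhoA_Aroot_adjacent hi hij hkl hl]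
    exact neg_one_pow_eq_or ℤ j
  · rw [← neg_sub, rhoA_sub_rhoA_Aroot_adjacent hk hkl hij hj]
    rcases neg_one_pow_eq_or ℤ l with h | h <;> simp [h]
end

section
/- In type A_r with the alternating orientation (Î = {(2,1),(2,3),(4,3),(4,5),...}) and ρ⃗(α,β) = -Σ_{(i,j)∈Î} n_i m_j, for positive roots α_{ij} and α_{kl} (1 ≤ i < j ≤ r+1, 1 ≤ k < l ≤ r+1) whose sum is a root, one has ρ⃗(α_{ij}, α_{kl}) = 0 if (k = j and j is even) or (l = i and i is odd), and ρ⃗(α_{ij}, α_{kl}) = -1 if (k = j and j is odd) or (l = i and i is even). -/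
open Finset

def orientedEdgesBetween (r i j k l : ℕ) : Finset (ℕ × ℕ) :=
  {p ∈ Icc 1 r ×ˢ Icc 1 r | p.1 % 2 = 0 ∧ (p.2 = p.1 + 1 ∨ p.1 = p.2 + 1) ∧
    (i ≤ p.1 ∧ p.1 < j) ∧ (k ≤ p.2 ∧ p.2 < l)}

theorem rhoA_Aroot_Aroot_eq_neg_card (r i j k l : ℕ) :
    rhoA r (Aroot i j) (Aroot k l) = -#(orientedEdgesBetween r i j k l) := by
  rw [rhoA, orientedEdgesBetween, card_filter, ← sum_product', Nat.cast_sum]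
  congr 1
  refine sum_congr rfl fun p _ => ?_
  simp only [Aroot]
  split_ifs <;> simp_all

theorem orientedEdgesBetween_of_adjacent_after {r i j l : ℕ} (hi : 1 ≤ i) (hij : i < j)
    (hjl : j < l) (hl : l ≤ r + 1) :
    orientedEdgesBetween r i j j l = if Odd j then {(j - 1, j)} else ∅ := by
  ext ⟨x, y⟩
  split_ifs with hj <;> simp [orientedEdgesBetween, Nat.odd_iff] at hj ⊢ <;> omega

theorem orientedEdgesBetween_of_adjacent_before {r i j k : ℕ} (hki : k < i) (hij : i < j)
    (hj : j ≤ r + 1) :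
    orientedEdgesBetween r i j k i = if Even i then {(i, i - 1)} else ∅ := by
  ext ⟨x, y⟩
  split_ifs with hi <;> simp [orientedEdgesBetween, Nat.even_iff] at hi ⊢ <;> omega

theorem rhoA_Aroot_Aroot_of_adjacent_after {r i j l : ℕ} (hi : 1 ≤ i) (hij : i < j)
    (hjl : j < l) (hl : l ≤ r + 1) :
    rhoA r (Aroot i j) (Aroot j l) = if Odd j then -1 else 0 := by
  rw [rhoA_Aroot_Aroot_eq_neg_card, orientedEdgesBetween_of_adjacent_after hi hij hjl hl]
  split_ifs <;> rfl

theorem rhoA_Aroot_Aroot_of_adjacent_before {r i j k : ℕ} (hki : k < i) (hij : i < j)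
    (hj : j ≤ r + 1) :
    rhoA r (Aroot i j) (Aroot k i) = if Even i then -1 else 0 := by
  rw [rhoA_Aroot_Aroot_eq_neg_card, orientedEdgesBetween_of_adjacent_before hki hij hj]
  split_ifs <;> rfl

theorem stmt15_general (r i j k l : ℕ) (h1 : 1 ≤ i) (h2 : i < j) (h3 : j ≤ r + 1)
    (h5 : k < l) (h6 : l ≤ r + 1) :
    (((k = j ∧ Even j) ∨ (l = i ∧ Odd i)) → rhoA r (Aroot i j) (Aroot k l) = 0) ∧
    (((k = j ∧ Odd j) ∨ (l = i ∧ Even i)) → rhoA r (Aroot i j) (Aroot k l) = -1) := by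
  constructor
  · rintro (⟨rfl, hj⟩ | ⟨rfl, hi⟩)
    · rw [rhoA_Aroot_Aroot_of_adjacent_after h1 h2 h5 h6, if_neg (Nat.not_odd_iff_even.2 hj)]
    · rw [rhoA_Aroot_Aroot_of_adjacent_before h5 h2 h3, if_neg (Nat.not_even_iff_odd.2 hi)]
  · rintro (⟨rfl, hj⟩ | ⟨rfl, hi⟩)
    · rw [rhoA_Aroot_Aroot_of_adjacent_after h1 h2 h5 h6, if_pos hj]
    · rw [rhoA_Aroot_Aroot_of_adjacent_before h5 h2 h3, if_pos hi]

/-- In type A_r with the alternating orientation, for positive roots α_{ij}, α_{kl}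
whose sum is a root: ρ⃗(α_{ij}, α_{kl}) = 0 if (k = j and j is even) or (l = i and
i is odd), and ρ⃗(α_{ij}, α_{kl}) = -1 if (k = j and j is odd) or (l = i and i is
even). -/
theorem stmt15 (r i j k l : ℕ) (h1 : 1 ≤ i) (h2 : i < j) (h3 : j ≤ r + 1)
    (h4 : 1 ≤ k) (h5 : k < l) (h6 : l ≤ r + 1)
    (hroot : Aroot i j + Aroot k l ∈ PhiA r) :
    (((k = j ∧ Even j) ∨ (l = i ∧ Odd i)) → rhoA r (Aroot i j) (Aroot k l) = 0) ∧
    (((k = j ∧ Odd j) ∨ (l = i ∧ Even i)) → rhoA r (Aroot i j) (Aroot k l) = -1) :=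
  stmt15_general r i j k l h1 h2 h3 h5 h6
end
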